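/- Let 𝒯 = (T, σ, 1) be an RTAM system at temperature 1 with |dom σ| = 1, and suppose some producible assembly α of 𝒯 contains in its binding graph a simple path q_0, q_1, …, q_{k−1} with q_0 the seed position. Then there exist ε_x, ε_y ∈ {−1, +1} and a producible assembly β of 𝒯 whose domain is exactly a set of positions p_0, p_1, …, p_{k−1} with p_0 the seed position and p_{i+1} − p_i ∈ {(ε_x, 0), (0, ε_y)} for every 0 ≤ i < k−1 (a monotone staircase path), such that for every i the tile type of β at p_i equals the tile type of α at q_i. (This is the 'stretched path' lemma: by suitably reflecting tiles, any path of tile types producible from the seed can be re-assembled as a monotone staircase.) -/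
import Mathlib


/-! # Reflexive Tile Assembly Model (RTAM) -/

/-- A glue: `none` is the null glue; `some (l, s)` has label `l : ℤ` and strength `s : ℕ`.
The complement of the label `l` is `-l`. -/
abbrev Glue : Type := Option (ℤ × ℕ)

/-- Strength with which two abutting glues bind: `s` if the labels are complementary and
the strengths are both equal to `s`, and `0` otherwise. -/
def glueBind : Glue → Glue → ℕ
  | some (l₁, s₁), some (l₂, s₂) => if l₂ = -l₁ ∧ s₂ = s₁ then s₁ else 0
  | _, _ => 0

/-- Two abutting glues match (for mismatch-freeness): both null, or complementary labels
with equal strengths. -/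
def GlueMatch (g h : Glue) : Prop :=
  (g = none ∧ h = none) ∨ ∃ l s, g = some (l, s) ∧ h = some (-l, s)

/-- A tile type: glues on the north, east, south and west sides (in that order). -/
abbrev TileType : Type := Glue × Glue × Glue × Glue

def TileType.north (t : TileType) : Glue := t.1
def TileType.east (t : TileType) : Glue := t.2.1
def TileType.south (t : TileType) : Glue := t.2.2.1
def TileType.west (t : TileType) : Glue := t.2.2.2

/-- A reflection `(h, v)`: `h` indicates a flip across the vertical axis (swapping east and
west and negating `x`), `v` a flip across the horizontal axis (swapping north and south and
negating `y`).  `D = (false, false)`, `H = (true, false)`, `V = (false, true)`,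
`B = (true, true)`. -/
abbrev Reflection : Type := Bool × Bool

/-- Composition of reflections (the Klein four-group). -/
def Reflection.comp (r s : Reflection) : Reflection := (xor r.1 s.1, xor r.2 s.2)

/-- The action of a reflection on a point of `ℤ²`. -/
def Reflection.onPoint (r : Reflection) (p : ℤ × ℤ) : ℤ × ℤ :=
  (if r.1 then -p.1 else p.1, if r.2 then -p.2 else p.2)

/-- The tile type obtained by reflecting `t` according to `r` (glues are unchanged, sides
are permuted). -/
def TileType.reflect (t : TileType) (r : Reflection) : TileType :=
  (if r.2 then TileType.south t else TileType.north t,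
   if r.1 then TileType.west t else TileType.east t,
   if r.2 then TileType.north t else TileType.south t,
   if r.1 then TileType.east t else TileType.west t)

/-- A placed tile: a tile type together with its reflection. -/
abbrev Placement : Type := TileType × Reflection

/-- An assembly: a partial function from `ℤ²` to placed tiles. -/
abbrev Assembly : Type := ℤ × ℤ → Option Placement

/-- The domain of an assembly. -/
def adom (α : Assembly) : Set (ℤ × ℤ) := {p | α p ≠ none}

/-- The glue presented by the placed tile `pl` at position `p` on the side facing
position `q` (the null glue if `q` is not adjacent to `p`). -/
def facingGlue (pl : Placement) (p q : ℤ × ℤ) : Glue :=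
  if q = (p.1 + 1, p.2) then TileType.east (TileType.reflect pl.1 pl.2)
  else if q = (p.1 - 1, p.2) then TileType.west (TileType.reflect pl.1 pl.2)
  else if q = (p.1, p.2 + 1) then TileType.north (TileType.reflect pl.1 pl.2)
  else if q = (p.1, p.2 - 1) then TileType.south (TileType.reflect pl.1 pl.2)
  else none

/-- The strength of the bond between the tiles of `α` at positions `p` and `q`. -/
def bondStrength (α : Assembly) (p q : ℤ × ℤ) : ℕ :=
  match α p, α q with
  | some a, some b => glueBind (facingGlue a p q) (facingGlue b q p)
  | _, _ => 0

/-- Adjacency in the binding graph of `α`. -/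
def BondAdj (α : Assembly) (p q : ℤ × ℤ) : Prop := 0 < bondStrength α p q

/-- `α` is `τ`-stable: every cut of its binding graph has total strength at least `τ`
(i.e. some finite set of crossing edges already has total strength at least `τ`). -/
def Stable (α : Assembly) (τ : ℕ) : Prop :=
  ∀ A : Set (ℤ × ℤ), A ⊆ adom α → A.Nonempty → (adom α \ A).Nonempty →
    ∃ E : Finset ((ℤ × ℤ) × (ℤ × ℤ)),
      (∀ e ∈ E, e.1 ∈ A ∧ e.2 ∈ adom α \ A) ∧
      τ ≤ ∑ e ∈ E, bondStrength α e.1 e.2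

/-- An RTAM tile assembly system: a finite tile set, a finite stable seed assembly, and a
temperature. -/
structure RTAS where
  tiles : Finset TileType
  seed : Assembly
  temp : ℕ
  seed_nonempty : (adom seed).Nonempty
  seed_finite : (adom seed).Finite
  seed_tiles : ∀ p pl, seed p = some pl → pl.1 ∈ tiles
  seed_stable : Stable seed temp

/-- `β` is obtained from `α` by `τ`-stably attaching a single tile (in any reflection) at
an empty position. -/
def Attaches (S : RTAS) (α β : Assembly) : Prop :=
  ∃ (p : ℤ × ℤ) (t : TileType) (r : Reflection),
    α p = none ∧ t ∈ S.tiles ∧ β = Function.update α p (some (t, r)) ∧ Stable β S.temp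

/-- Producible assemblies: those reachable from the seed in finitely many attachment steps
or in the limit. -/
def Producible (S : RTAS) (α : Assembly) : Prop :=
  ∃ f : ℕ → Assembly, f 0 = S.seed ∧
    (∀ n, f (n + 1) = f n ∨ Attaches S (f n) (f (n + 1))) ∧
    (∀ p pl, α p = some pl ↔ ∃ n, f n p = some pl)

/-- Terminal assemblies: producible assemblies admitting no further attachment. -/
def Terminal (S : RTAS) (α : Assembly) : Prop :=
  Producible S α ∧ ∀ β, ¬ Attaches S α β

/-- Apply the reflection `r` and then the translation `v` to the assembly `α`. -/
def transform (α : Assembly) (r : Reflection) (v : ℤ × ℤ) : Assembly :=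
  fun p => (α (Reflection.onPoint r (p - v))).map fun pl => (pl.1, Reflection.comp r pl.2)

/-- The configuration of an assembly: forget the reflections of the placed tiles. -/
def config (α : Assembly) : ℤ × ℤ → Option TileType := fun p => (α p).map Prod.fst

/-- A system is directed if any two producible assemblies have the same configuration up
to a reflection and a translation. -/
def RTASDirected (S : RTAS) : Prop :=
  ∀ α β, Producible S α → Producible S β →
    ∃ (r : Reflection) (v : ℤ × ℤ), config (transform β r v) = config α

/-- A system is singly seeded if its seed consists of a single tile. -/
def SinglySeeded (S : RTAS) : Prop := ∃ p, adom S.seed = {p}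

/-- `X` weakly self-assembles in `S`. -/
def WeaklySelfAssembles (S : RTAS) (X : Set (ℤ × ℤ)) : Prop :=
  ∃ B ⊆ S.tiles, ∀ α, Terminal S α →
    ∃ (r : Reflection) (v : ℤ × ℤ),
      {p | ∃ pl, transform α r v p = some pl ∧ pl.1 ∈ B} = X

/-- `X` strictly self-assembles in `S`. -/
def StrictlySelfAssembles (S : RTAS) (X : Set (ℤ × ℤ)) : Prop :=
  ∀ α, Terminal S α →
    ∃ (r : Reflection) (v : ℤ × ℤ), adom (transform α r v) = X

/-- A semi-doubly periodic subset of `ℤ²`. -/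
def SemiDoublyPeriodic (X : Set (ℤ × ℤ)) : Prop :=
  ∃ b u v : ℤ × ℤ, X = {p | ∃ n m : ℕ, p = b + (n : ℤ) • u + (m : ℤ) • v}

/-- A finite union of semi-doubly periodic sets. -/
def FiniteUnionSDP (X : Set (ℤ × ℤ)) : Prop :=
  ∃ (k : ℕ) (f : Fin k → Set (ℤ × ℤ)),
    (∀ i, SemiDoublyPeriodic (f i)) ∧ X = ⋃ i, f i

/-- The box of radius `c` centered at `v`. -/
def box (c : ℕ) (v : ℤ × ℤ) : Set (ℤ × ℤ) :=
  {p | |p.1 - v.1| ≤ (c : ℤ) ∧ |p.2 - v.2| ≤ (c : ℤ)}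

/-- The `n × m` rectangle `{0, …, n−1} × {0, …, m−1} ⊆ ℤ²`. -/
def rectShape (n m : ℕ) : Set (ℤ × ℤ) :=
  {p | 0 ≤ p.1 ∧ p.1 < (n : ℤ) ∧ 0 ≤ p.2 ∧ p.2 < (m : ℤ)}

/-- The `n × n` square `{0, …, n−1}² ⊆ ℤ²`. -/
def squareShape (n : ℕ) : Set (ℤ × ℤ) := rectShape n n

/-- Grid adjacency on `ℤ²`. -/
def GridAdj (p q : ℤ × ℤ) : Prop := (p.1 - q.1).natAbs + (p.2 - q.2).natAbs = 1

/-- `X` is connected in the grid graph. -/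
def GridConnectedOn (X : Set (ℤ × ℤ)) : Prop :=
  ∀ p ∈ X, ∀ q ∈ X, Relation.ReflTransGen (fun a b => GridAdj a b ∧ a ∈ X ∧ b ∈ X) p q

/-- A shape: a finite nonempty connected subset of `ℤ²`. -/
def IsShape (X : Set (ℤ × ℤ)) : Prop := X.Finite ∧ X.Nonempty ∧ GridConnectedOn X

/-- A system is mismatch-free: in every producible assembly, abutting sides of adjacent
tiles are either both null or carry complementary glues of equal strength. -/
def MismatchFree (S : RTAS) : Prop :=
  ∀ α, Producible S α → ∀ p q a b, GridAdj p q → α p = some a → α q = some b →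
    GlueMatch (facingGlue a p q) (facingGlue b q p)

/-- `X` is odd-symmetric with respect to some horizontal or vertical line through lattice
points. -/
def OddSymmetric (X : Set (ℤ × ℤ)) : Prop :=
  (∃ l : ℤ, ∀ a b : ℤ, ((a, l - b) ∈ X ↔ (a, l + b) ∈ X)) ∨
  (∃ l : ℤ, ∀ a b : ℤ, ((l - a, b) ∈ X ↔ (l + a, b) ∈ X))

/-- The binding graph of `α` is a tree: connected on `adom α` and every edge is a bridge. -/
def BindingGraphIsTree (α : Assembly) : Prop :=
  (∀ p ∈ adom α, ∀ q ∈ adom α, Relation.ReflTransGen (BondAdj α) p q) ∧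
  (∀ p q, BondAdj α p q →
    ¬ Relation.ReflTransGen
      (fun a b => BondAdj α a b ∧ ¬((a = p ∧ b = q) ∨ (a = q ∧ b = p))) p q)

/-- A spanning tree of the grid graph of a shape `X`. -/
structure TreeOf (X : Set (ℤ × ℤ)) where
  adj : ℤ × ℤ → ℤ × ℤ → Prop
  symm : ∀ p q, adj p q → adj q p
  valid : ∀ p q, adj p q → p ∈ X ∧ q ∈ X ∧ GridAdj p q
  connected : ∀ p ∈ X, ∀ q ∈ X, Relation.ReflTransGen adj p q
  acyclic : ∀ p q, adj p q →
    ¬ Relation.ReflTransGen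
      (fun a b => adj a b ∧ ¬((a = p ∧ b = q) ∨ (a = q ∧ b = p))) p q

/-- The vertex set of a horizontal axis at height `l` from `x₁` to `x₂`. -/
def hAxisSet (l x₁ x₂ : ℤ) : Set (ℤ × ℤ) := {p | p.2 = l ∧ x₁ ≤ p.1 ∧ p.1 ≤ x₂}

/-- The vertex set of a vertical axis at abscissa `l` from `y₁` to `y₂`. -/
def vAxisSet (l y₁ y₂ : ℤ) : Set (ℤ × ℤ) := {p | p.1 = l ∧ y₁ ≤ p.2 ∧ p.2 ≤ y₂}

/-- A (maximal) horizontal axis of the tree `t`: consecutive vertices on the line `y = l`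
joined by tree edges, not extendable on either end. -/
def IsHAxis {X : Set (ℤ × ℤ)} (t : TreeOf X) (l x₁ x₂ : ℤ) : Prop :=
  x₁ ≤ x₂ ∧ (∀ x, x₁ ≤ x → x ≤ x₂ → ((x, l) : ℤ × ℤ) ∈ X) ∧
  (∀ x, x₁ ≤ x → x < x₂ → t.adj (x, l) (x + 1, l)) ∧
  ¬ t.adj (x₁ - 1, l) (x₁, l) ∧ ¬ t.adj (x₂, l) (x₂ + 1, l)

/-- A (maximal) vertical axis of the tree `t`. -/
def IsVAxis {X : Set (ℤ × ℤ)} (t : TreeOf X) (l y₁ y₂ : ℤ) : Prop :=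
  y₁ ≤ y₂ ∧ (∀ y, y₁ ≤ y → y ≤ y₂ → ((l, y) : ℤ × ℤ) ∈ X) ∧
  (∀ y, y₁ ≤ y → y < y₂ → t.adj (l, y) (l, y + 1)) ∧
  ¬ t.adj (l, y₁ - 1) (l, y₁) ∧ ¬ t.adj (l, y₂) (l, y₂ + 1)

/-- The union of the axial branches of `t` beginning from `v` relative to the axis `a`
(together with `v` itself): everything reachable from `v` through a neighbor not on `a`
without revisiting `v`. -/
def branch {X : Set (ℤ × ℤ)} (t : TreeOf X) (a : Set (ℤ × ℤ)) (v : ℤ × ℤ) :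
    Set (ℤ × ℤ) :=
  {v} ∪ {p | ∃ w, t.adj v w ∧ w ∉ a ∧
    Relation.ReflTransGen (fun x y => t.adj x y ∧ x ≠ v ∧ y ≠ v) w p}

/-- The axial branches of `t` beginning from `v` are symmetric across the reflection `ρ`
(of `ℤ²` across the line of the axis `a`). -/
def BranchSymmetric {X : Set (ℤ × ℤ)} (t : TreeOf X) (a : Set (ℤ × ℤ))
    (ρ : ℤ × ℤ → ℤ × ℤ) (v : ℤ × ℤ) : Prop :=
  (∀ p ∈ branch t a v, ρ p ∈ branch t a v) ∧
  (∀ p q, p ∈ branch t a v → q ∈ branch t a v → t.adj p q → t.adj (ρ p) (ρ q))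

/-- `t` is off-by-one symmetric across the horizontal axis determined by `(l, x₁, x₂)`:
the branches from every vertex of the axis, except at most one, are symmetric across it. -/
def OffByOneH {X : Set (ℤ × ℤ)} (t : TreeOf X) (l x₁ x₂ : ℤ) : Prop :=
  ∃ v₀ : ℤ × ℤ, ∀ x, x₁ ≤ x → x ≤ x₂ → ((x, l) : ℤ × ℤ) ≠ v₀ →
    BranchSymmetric t (hAxisSet l x₁ x₂) (fun p => (p.1, 2 * l - p.2)) (x, l)

/-- `t` is off-by-one symmetric across the vertical axis determined by `(l, y₁, y₂)`. -/
def OffByOneV {X : Set (ℤ × ℤ)} (t : TreeOf X) (l y₁ y₂ : ℤ) : Prop :=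
  ∃ v₀ : ℤ × ℤ, ∀ y, y₁ ≤ y → y ≤ y₂ → ((l, y) : ℤ × ℤ) ≠ v₀ →
    BranchSymmetric t (vAxisSet l y₁ y₂) (fun p => (2 * l - p.1, p.2)) (l, y)

/-- A tree is ε-symmetric if it is off-by-one symmetric across each of its axes. -/
def TreeOf.EpsSymmetric {X : Set (ℤ × ℤ)} (t : TreeOf X) : Prop :=
  (∀ l x₁ x₂, IsHAxis t l x₁ x₂ → OffByOneH t l x₁ x₂) ∧
  (∀ l y₁ y₂, IsVAxis t l y₁ y₂ → OffByOneV t l y₁ y₂)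

/-- A shape is ε-symmetric if some spanning tree of its grid graph is ε-symmetric. -/
def EpsSymmetricShape (X : Set (ℤ × ℤ)) : Prop :=
  ∃ t : TreeOf X, TreeOf.EpsSymmetric t

/-- The `c`-scaling of a shape: replace each point by a `c × c` block. -/
def scaleShape (X : Set (ℤ × ℤ)) (c : ℕ) : Set (ℤ × ℤ) :=
  {p | (Int.fdiv p.1 (c : ℤ), Int.fdiv p.2 (c : ℤ)) ∈ X}

/-- The assembly encoded by a finite list of placed tiles. -/
def listAssembly (L : List ((ℤ × ℤ) × Placement)) : Assembly :=
  fun p => (L.find? fun e => decide (e.1 = p)).map Prod.snd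


/-! ## Auxiliary definitions and lemmas for the stretched-path lemma -/

section StretchedPathAux

lemma glueBind_none_left (g : Glue) : glueBind none g = 0 := by cases g <;> rfl

lemma glueBind_comm (g h : Glue) : glueBind g h = glueBind h g := by
  rcases g with _ | ⟨l1, s1⟩ <;> rcases h with _ | ⟨l2, s2⟩ <;> simp [glueBind]
  split_ifs with h1 h2 h2 <;> omega

lemma reflect_comp (t : TileType) (f r : Reflection) :
    TileType.reflect t (Reflection.comp f r) = TileType.reflect (TileType.reflect t r) f := by
  rcases f with ⟨f1, f2⟩; rcases r with ⟨r1, r2⟩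
  cases f1 <;> cases f2 <;> cases r1 <;> cases r2 <;> rfl

lemma east_reflect (t : TileType) (b c : Bool) :
    TileType.east (TileType.reflect t (b, c)) = if b then TileType.west t else TileType.east t := rfl

lemma west_reflect (t : TileType) (b c : Bool) :
    TileType.west (TileType.reflect t (b, c)) = if b then TileType.east t else TileType.west t := rfl

lemma north_reflect (t : TileType) (b c : Bool) :
    TileType.north (TileType.reflect t (b, c)) = if c then TileType.south t else TileType.north t := rfl

lemma south_reflect (t : TileType) (b c : Bool) :
    TileType.south (TileType.reflect t (b, c)) = if c then TileType.north t else TileType.south t := rfl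

lemma pair_add (a : ℤ × ℤ) (u v : ℤ) : a + (u, v) = (a.1 + u, a.2 + v) := rfl

lemma fg_east (pl : Placement) (a b : ℤ × ℤ) (h : b = a + (1, 0)) :
    facingGlue pl a b = TileType.east (TileType.reflect pl.1 pl.2) := by
  subst h
  have : a + ((1 : ℤ), (0 : ℤ)) = (a.1 + 1, a.2) := by rw [pair_add, add_zero]
  rw [this, facingGlue, if_pos rfl]

lemma fg_west (pl : Placement) (a b : ℤ × ℤ) (h : b = a + (-1, 0)) :
    facingGlue pl a b = TileType.west (TileType.reflect pl.1 pl.2) := by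
  subst h
  have : a + ((-1 : ℤ), (0 : ℤ)) = (a.1 - 1, a.2) := by rw [pair_add, add_zero]; ring_nf
  rw [this, facingGlue]
  rw [if_neg (by intro hcon; rw [Prod.mk.injEq] at hcon; omega), if_pos rfl]

lemma fg_north (pl : Placement) (a b : ℤ × ℤ) (h : b = a + (0, 1)) :
    facingGlue pl a b = TileType.north (TileType.reflect pl.1 pl.2) := by
  subst h
  have : a + ((0 : ℤ), (1 : ℤ)) = (a.1, a.2 + 1) := by rw [pair_add, add_zero]
  rw [this, facingGlue]
  rw [if_neg (by intro hcon; rw [Prod.mk.injEq] at hcon; omega), if_neg (by intro hcon; rw [Prod.mk.injEq] at hcon; omega), if_pos rfl]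

lemma fg_south (pl : Placement) (a b : ℤ × ℤ) (h : b = a + (0, -1)) :
    facingGlue pl a b = TileType.south (TileType.reflect pl.1 pl.2) := by
  subst h
  have : a + ((0 : ℤ), (-1 : ℤ)) = (a.1, a.2 - 1) := by rw [pair_add, add_zero]; ring_nf
  rw [this, facingGlue]
  rw [if_neg (by intro hcon; rw [Prod.mk.injEq] at hcon; omega), if_neg (by intro hcon; rw [Prod.mk.injEq] at hcon; omega),
    if_neg (by intro hcon; rw [Prod.mk.injEq] at hcon; omega), if_pos rfl]

lemma fg_none (pl : Placement) (a b : ℤ × ℤ)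
    (h1 : b ≠ a + (1, 0)) (h2 : b ≠ a + (-1, 0)) (h3 : b ≠ a + (0, 1)) (h4 : b ≠ a + (0, -1)) :
    facingGlue pl a b = none := by
  rw [facingGlue]
  rw [if_neg (by rw [pair_add] at h1; simpa using h1),
    if_neg (by rw [pair_add] at h2; rcases b with ⟨b1,b2⟩; simp [Prod.ext_iff] at h2 ⊢; omega),
    if_neg (by rw [pair_add] at h3; simpa using h3),
    if_neg (by rw [pair_add] at h4; rcases b with ⟨b1,b2⟩; simp [Prod.ext_iff] at h4 ⊢; omega)]

end StretchedPathAux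

section StretchedPathAux2

lemma fg_flip_horiz (t : TileType) (r : Reflection) (bx c : Bool) (ε σ : ℤ) (a a' : ℤ × ℤ)
    (hσ : σ = 1 ∨ σ = -1) (hε : ε = 1 ∨ ε = -1)
    (hb : bx = xor (decide (σ = -1)) (decide (ε = -1))) :
    facingGlue (t, Reflection.comp (bx, c) r) a (a + (ε, 0)) =
      facingGlue (t, r) a' (a' + (σ, 0)) := by
  rcases hσ with hσ | hσ <;> rcases hε with hε | hε <;> subst hσ <;> subst hε <;>
    simp only [decide_eq_true_eq, show ¬((1:ℤ) = -1) by omega, decide_eq_false_iff_not,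
      Bool.xor_false, Bool.xor_true, Bool.false_xor, Bool.true_xor, decide_eq_true,
      Bool.not_true, Bool.not_false] at hb <;>
  first
  | (rw [hb, fg_east _ _ _ rfl, fg_east _ _ _ rfl, reflect_comp]
     rcases r with ⟨r1, r2⟩
     simp [east_reflect, Reflection.comp])
  | (rw [hb, fg_west _ _ _ rfl, fg_west _ _ _ rfl, reflect_comp]
     rcases r with ⟨r1, r2⟩
     simp [west_reflect, Reflection.comp])
  | (rw [hb, fg_west _ _ _ rfl, fg_east _ _ _ rfl, reflect_comp]
     rcases r with ⟨r1, r2⟩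
     simp [east_reflect, west_reflect, Reflection.comp])
  | (rw [hb, fg_east _ _ _ rfl, fg_west _ _ _ rfl, reflect_comp]
     rcases r with ⟨r1, r2⟩
     simp [east_reflect, west_reflect, Reflection.comp])

end StretchedPathAux2

section StretchedPathAux3
set_option linter.unreachableTactic false
set_option linter.unusedTactic false

lemma fg_flip_vert (t : TileType) (r : Reflection) (b c : Bool) (ε σ : ℤ) (a a' : ℤ × ℤ)
    (hσ : σ = 1 ∨ σ = -1) (hε : ε = 1 ∨ ε = -1)
    (hb : c = xor (decide (σ = -1)) (decide (ε = -1))) :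
    facingGlue (t, Reflection.comp (b, c) r) a (a + (0, ε)) =
      facingGlue (t, r) a' (a' + (0, σ)) := by
  rcases hσ with hσ | hσ <;> rcases hε with hε | hε <;> subst hσ <;> subst hε <;>
    simp only [decide_eq_true_eq, show ¬((1:ℤ) = -1) by omega, decide_eq_false_iff_not,
      Bool.xor_false, Bool.xor_true, Bool.false_xor, Bool.true_xor, decide_eq_true,
      Bool.not_true, Bool.not_false] at hb <;>
  first
  | (rw [hb, fg_north _ _ _ rfl, fg_north _ _ _ rfl, reflect_comp]
     rcases r with ⟨r1, r2⟩
     simp [north_reflect, Reflection.comp])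
  | (rw [hb, fg_south _ _ _ rfl, fg_south _ _ _ rfl, reflect_comp]
     rcases r with ⟨r1, r2⟩
     simp [south_reflect, Reflection.comp])
  | (rw [hb, fg_south _ _ _ rfl, fg_north _ _ _ rfl, reflect_comp]
     rcases r with ⟨r1, r2⟩
     simp [north_reflect, south_reflect, Reflection.comp])
  | (rw [hb, fg_north _ _ _ rfl, fg_south _ _ _ rfl, reflect_comp]
     rcases r with ⟨r1, r2⟩
     simp [north_reflect, south_reflect, Reflection.comp])

/-- Horizontal flip bits along the path. -/
def bxA (k : ℕ) (q : ℕ → ℤ × ℤ) : ℕ → Bool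
  | 0 => decide (1 < k ∧ (q 1).1 - (q 0).1 = -1)
  | i + 1 =>
    if i + 1 + 1 < k ∧ (q (i + 1 + 1)).1 - (q (i + 1)).1 ≠ 0 then
      decide ((q (i + 1 + 1)).1 - (q (i + 1)).1 = -1)
    else if (q (i + 1)).1 - (q i).1 ≠ 0 then decide ((q (i + 1)).1 - (q i).1 = -1)
    else bxA k q i

/-- Vertical flip bits along the path. -/
def byA (k : ℕ) (q : ℕ → ℤ × ℤ) : ℕ → Bool
  | 0 => decide (1 < k ∧ (q 1).2 - (q 0).2 = -1)
  | i + 1 =>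
    if i + 1 + 1 < k ∧ (q (i + 1 + 1)).2 - (q (i + 1)).2 ≠ 0 then
      decide ((q (i + 1 + 1)).2 - (q (i + 1)).2 = -1)
    else if (q (i + 1)).2 - (q i).2 ≠ 0 then decide ((q (i + 1)).2 - (q i).2 = -1)
    else byA k q i

def exA (k : ℕ) (q : ℕ → ℤ × ℤ) : ℤ := if bxA k q 0 then -1 else 1
def eyA (k : ℕ) (q : ℕ → ℤ × ℤ) : ℤ := if byA k q 0 then -1 else 1

/-- The staircase positions. -/
def pA (k : ℕ) (q : ℕ → ℤ × ℤ) : ℕ → ℤ × ℤ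
  | 0 => q 0
  | i + 1 =>
    pA k q i + (if (q (i + 1)).1 - (q i).1 ≠ 0 then (exA k q, 0) else (0, eyA k q))

def dummyPl : Placement := ((none, none, none, none), (false, false))

def plOf (α : Assembly) (x : ℤ × ℤ) : Placement := (α x).getD dummyPl

def flipA (k : ℕ) (q : ℕ → ℤ × ℤ) (i : ℕ) : Reflection :=
  (xor (bxA k q i) (bxA k q 0), xor (byA k q i) (byA k q 0))

/-- The re-reflected placed tiles for the staircase. -/
def plA (α : Assembly) (k : ℕ) (q : ℕ → ℤ × ℤ) (i : ℕ) : Placement :=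
  ((plOf α (q i)).1, Reflection.comp (flipA k q i) (plOf α (q i)).2)

/-- The assembly sequence building the staircase. -/
def gA (Sys : RTAS) (α : Assembly) (k : ℕ) (q : ℕ → ℤ × ℤ) : ℕ → Assembly
  | 0 => Sys.seed
  | n + 1 =>
    if n + 1 < k then
      Function.update (gA Sys α k q n) (pA k q (n + 1)) (some (plA α k q (n + 1)))
    else gA Sys α k q n

end StretchedPathAux3

section StretchedPathAux4

lemma bondStrength_some (γ : Assembly) (x y : ℤ × ℤ) (a b : Placement)
    (ha : γ x = some a) (hb : γ y = some b) :
    bondStrength γ x y = glueBind (facingGlue a x y) (facingGlue b y x) := by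
  unfold bondStrength; rw [ha, hb]

lemma pair_shift (a b : ℤ × ℤ) (u v u' v' : ℤ) (h : b = a + (u, v))
    (hu : u' = -u) (hv : v' = -v) : a = b + (u', v') := by
  subst h; subst hu; subst hv
  rw [pair_add, pair_add]
  obtain ⟨a1, a2⟩ := a
  simp [Prod.ext_iff]

lemma xor_decide_neg (σ ε : ℤ) (hσ : σ = 1 ∨ σ = -1) (hε : ε = 1 ∨ ε = -1) :
    xor (decide (σ = -1)) (decide (ε = -1)) =
      xor (decide (-σ = -1)) (decide (-ε = -1)) := by
  rcases hσ with h | h <;> rcases hε with h' | h' <;> subst h <;> subst h' <;> decide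

lemma fg_flip_horiz' (pl : Placement) (bx c : Bool) (ε σ : ℤ) (a a' : ℤ × ℤ)
    (hσ : σ = 1 ∨ σ = -1) (hε : ε = 1 ∨ ε = -1)
    (hb : bx = xor (decide (σ = -1)) (decide (ε = -1))) :
    facingGlue (pl.1, Reflection.comp (bx, c) pl.2) a (a + (ε, 0)) =
      facingGlue pl a' (a' + (σ, 0)) := by
  obtain ⟨t, r⟩ := pl; exact fg_flip_horiz t r bx c ε σ a a' hσ hε hb

lemma fg_flip_vert' (pl : Placement) (b c : Bool) (ε σ : ℤ) (a a' : ℤ × ℤ)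
    (hσ : σ = 1 ∨ σ = -1) (hε : ε = 1 ∨ ε = -1)
    (hb : c = xor (decide (σ = -1)) (decide (ε = -1))) :
    facingGlue (pl.1, Reflection.comp (b, c) pl.2) a (a + (0, ε)) =
      facingGlue pl a' (a' + (0, σ)) := by
  obtain ⟨t, r⟩ := pl; exact fg_flip_vert t r b c ε σ a a' hσ hε hb

end StretchedPathAux4

section PAEq
lemma pA_succ (k : ℕ) (q : ℕ → ℤ × ℤ) (i : ℕ) :
    pA k q (i + 1) = pA k q i +
      (if (q (i + 1)).1 - (q i).1 ≠ 0 then (exA k q, 0) else (0, eyA k q)) := by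
  rw [pA]
end PAEq

set_option maxHeartbeats 1000000 in
/-- **stretched-path lemma.** Any simple path from the seed in the binding
graph of a producible assembly of a singly seeded temperature-1 RTAM system can be
re-assembled, with the same tile types in the same order, as a producible monotone
staircase path. -/
theorem rtam_stretched_path
    (Sys : RTAS) (hτ : Sys.temp = 1)
    (s0 : ℤ × ℤ) (hseed : adom Sys.seed = {s0})
    (α : Assembly) (hα : Producible Sys α)
    (k : ℕ) (hk : 0 < k) (q : ℕ → ℤ × ℤ)
    (hq0 : q 0 = s0)
    (hmem : ∀ i < k, q i ∈ adom α)
    (hinj : ∀ i < k, ∀ j < k, q i = q j → i = j)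
    (hadj : ∀ i, i + 1 < k → BondAdj α (q i) (q (i + 1))) :
    ∃ εx εy : ℤ, (εx = 1 ∨ εx = -1) ∧ (εy = 1 ∨ εy = -1) ∧
      ∃ β, Producible Sys β ∧
        ∃ p : ℕ → ℤ × ℤ, p 0 = s0 ∧
          (∀ i, i + 1 < k → p (i + 1) - p i = (εx, 0) ∨ p (i + 1) - p i = (0, εy)) ∧
          adom β = {x | ∃ i < k, x = p i} ∧
          ∀ i < k, config β (p i) = config α (q i) := by
  classical
  obtain ⟨f, hf0, hfstep, hflim⟩ := hα
  -- every tile of α is in the tile set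
  have htiles : ∀ x pl, α x = some pl → pl.1 ∈ Sys.tiles := by
    intro x pl h
    obtain ⟨n, hn⟩ := (hflim x pl).mp h
    clear h
    induction n generalizing x pl with
    | zero => rw [hf0] at hn; exact Sys.seed_tiles x pl hn
    | succ m ih =>
      rcases hfstep m with he | ⟨pos, t, r, hnone, ht, hupd, hstb⟩
      · rw [he] at hn; exact ih x pl hn
      · rw [hupd] at hn
        by_cases hxy : x = pos
        · subst hxy
          rw [Function.update_self] at hn
          injection hn with hn'
          rw [← hn']
          exact ht
        · rw [Function.update_of_ne hxy] at hn
          exact ih x pl hn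
  -- α is defined on the path, with value plOf
  have htile : ∀ i, i < k → α (q i) = some (plOf α (q i)) := by
    intro i hi
    have h := hmem i hi
    rw [adom, Set.mem_setOf_eq] at h
    rcases Option.ne_none_iff_exists'.mp h with ⟨pl, hpl⟩
    rw [plOf, hpl]; rfl
  -- positivity of the original glue bonds
  have hbond : ∀ i, i + 1 < k →
      0 < glueBind (facingGlue (plOf α (q i)) (q i) (q (i + 1)))
        (facingGlue (plOf α (q (i + 1))) (q (i + 1)) (q i)) := by
    intro i hi
    have h := hadj i hi
    rw [BondAdj, bondStrength_some α (q i) (q (i + 1)) _ _ (htile i (by omega))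
      (htile (i + 1) hi)] at h
    exact h
  -- steps are unit grid steps
  have hstep : ∀ i, i + 1 < k → q (i + 1) = q i + (1, 0) ∨ q (i + 1) = q i + (-1, 0) ∨
      q (i + 1) = q i + (0, 1) ∨ q (i + 1) = q i + (0, -1) := by
    intro i hi
    by_contra hno
    push_neg at hno
    obtain ⟨h1, h2, h3, h4⟩ := hno
    have h := hbond i hi
    rw [fg_none _ _ _ h1 h2 h3 h4, glueBind_none_left] at h
    exact lt_irrefl 0 h
  have hstep' : ∀ i, i + 1 < k →
      ((q (i + 1)).1 - (q i).1 = 1 ∨ (q (i + 1)).1 - (q i).1 = -1) ∧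
        (q (i + 1)).2 - (q i).2 = 0 ∨
      (q (i + 1)).1 - (q i).1 = 0 ∧
        ((q (i + 1)).2 - (q i).2 = 1 ∨ (q (i + 1)).2 - (q i).2 = -1) := by
    intro i hi
    rcases hstep i hi with h | h | h | h <;> rw [h, pair_add] <;> simp <;> omega
  -- no immediate reversal
  have hnorev : ∀ i, i + 1 + 1 < k →
      ¬((q (i + 1 + 1)).1 = (q i).1 ∧ (q (i + 1 + 1)).2 = (q i).2) := by
    intro i hi hc
    have : q (i + 1 + 1) = q i := Prod.ext hc.1 hc.2
    have := hinj (i + 1 + 1) hi i (by omega) this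
    omega
  -- flip-bit invariants
  have hI1x : ∀ i, i + 1 < k → (q (i + 1)).1 - (q i).1 ≠ 0 →
      bxA k q i = decide ((q (i + 1)).1 - (q i).1 = -1) := by
    intro i hi hne
    cases i with
    | zero => rw [bxA]; simp [hi]
    | succ n => rw [bxA, if_pos ⟨hi, hne⟩]
  have hI1y : ∀ i, i + 1 < k → (q (i + 1)).2 - (q i).2 ≠ 0 →
      byA k q i = decide ((q (i + 1)).2 - (q i).2 = -1) := by
    intro i hi hne
    cases i with
    | zero => rw [byA]; simp [hi]
    | succ n => rw [byA, if_pos ⟨hi, hne⟩]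
  have hI2x : ∀ i, i + 1 < k → (q (i + 1)).1 - (q i).1 ≠ 0 →
      bxA k q (i + 1) = bxA k q i := by
    intro i hi hne
    rw [bxA]
    by_cases hc : i + 1 + 1 < k ∧ (q (i + 1 + 1)).1 - (q (i + 1)).1 ≠ 0
    · rw [if_pos hc, hI1x i hi hne]
      have hss : (q (i + 1 + 1)).1 - (q (i + 1)).1 = (q (i + 1)).1 - (q i).1 := by
        have a := hstep' i hi
        have b := hstep' (i + 1) hc.1
        have c := hnorev i hc.1
        have d := hc.2
        omega
      rw [hss]
    · rw [if_neg hc, if_pos hne, hI1x i hi hne]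
  have hI2y : ∀ i, i + 1 < k → (q (i + 1)).2 - (q i).2 ≠ 0 →
      byA k q (i + 1) = byA k q i := by
    intro i hi hne
    rw [byA]
    by_cases hc : i + 1 + 1 < k ∧ (q (i + 1 + 1)).2 - (q (i + 1)).2 ≠ 0
    · rw [if_pos hc, hI1y i hi hne]
      have hss : (q (i + 1 + 1)).2 - (q (i + 1)).2 = (q (i + 1)).2 - (q i).2 := by
        have a := hstep' i hi
        have b := hstep' (i + 1) hc.1
        have c := hnorev i hc.1
        have d := hc.2
        omega
      rw [hss]
    · rw [if_neg hc, if_pos hne, hI1y i hi hne]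
  -- the step signs
  have hεx1 : exA k q = 1 ∨ exA k q = -1 := by
    rw [exA]; cases bxA k q 0 <;> simp
  have hεy1 : eyA k q = 1 ∨ eyA k q = -1 := by
    rw [eyA]; cases byA k q 0 <;> simp
  have hdecx : decide (exA k q = -1) = bxA k q 0 := by
    cases hb0 : bxA k q 0 <;> rw [exA, hb0] <;> decide
  have hdecy : decide (eyA k q = -1) = byA k q 0 := by
    cases hb0 : byA k q 0 <;> rw [eyA, hb0] <;> decide
  -- injectivity of the staircase positions
  have hmonop : ∀ i : ℕ, exA k q * (pA k q i).1 + eyA k q * (pA k q i).2 =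
      exA k q * (pA k q 0).1 + eyA k q * (pA k q 0).2 + i := by
    intro i
    induction i with
    | zero => simp
    | succ n ih =>
      have hx2 : exA k q * exA k q = 1 := by rcases hεx1 with h | h <;> rw [h] <;> norm_num
      have hy2 : eyA k q * eyA k q = 1 := by rcases hεy1 with h | h <;> rw [h] <;> norm_num
      rw [pA_succ]
      by_cases hc : (q (n + 1)).1 - (q n).1 ≠ 0
      · rw [if_pos hc, pair_add]
        push_cast
        nlinarith [ih, hx2]
      · rw [if_neg hc, pair_add]
        push_cast
        nlinarith [ih, hy2]
  have hpinj : ∀ i j : ℕ, pA k q i = pA k q j → i = j := by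
    intro i j h
    have h1 := hmonop i
    have h2 := hmonop j
    rw [h] at h1
    omega
  -- the key glue-alignment claim
  have hkey : ∀ i, i + 1 < k →
      facingGlue (plA α k q i) (pA k q i) (pA k q (i + 1)) =
        facingGlue (plOf α (q i)) (q i) (q (i + 1)) ∧
      facingGlue (plA α k q (i + 1)) (pA k q (i + 1)) (pA k q i) =
        facingGlue (plOf α (q (i + 1))) (q (i + 1)) (q i) := by
    intro i hi
    rcases hstep i hi with h | h | h | h
    · -- step (1,0)
      have hσ : (q (i + 1)).1 - (q i).1 = 1 := by rw [h, pair_add]; simp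
      have hne : (q (i + 1)).1 - (q i).1 ≠ 0 := by omega
      have hp1 : pA k q (i + 1) = pA k q i + (exA k q, 0) := by rw [pA, if_pos hne]
      have hbx : bxA k q i = decide ((1 : ℤ) = -1) := by rw [hI1x i hi hne, hσ]
      have hb1 : xor (bxA k q i) (bxA k q 0) =
          xor (decide ((1 : ℤ) = -1)) (decide (exA k q = -1)) := by rw [hbx, hdecx]
      have hb2 : xor (bxA k q (i + 1)) (bxA k q 0) =
          xor (decide ((-1 : ℤ) = -1)) (decide (-exA k q = -1)) := by
        rw [hI2x i hi hne, hb1]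
        exact xor_decide_neg 1 (exA k q) (Or.inl rfl) hεx1
      constructor
      · rw [hp1, h]
        simp only [plA, flipA]
        exact fg_flip_horiz' (plOf α (q i)) _ _ (exA k q) 1 _ _ (Or.inl rfl) hεx1 hb1
      · have hq2 : q i = q (i + 1) + (-1, 0) :=
          pair_shift (q i) (q (i + 1)) 1 0 (-1) 0 h (by norm_num) (by norm_num)
        have hp2 : pA k q i = pA k q (i + 1) + (-exA k q, 0) :=
          pair_shift (pA k q i) (pA k q (i + 1)) (exA k q) 0 (-exA k q) 0 hp1 rfl
            (by norm_num)
        rw [hp2, hq2]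
        simp only [plA, flipA]
        exact fg_flip_horiz' (plOf α (q (i + 1))) _ _ (-exA k q) (-1) _ _ (Or.inr rfl)
          (by rcases hεx1 with h' | h' <;> rw [h'] <;> norm_num) hb2
    · -- step (-1,0)
      have hσ : (q (i + 1)).1 - (q i).1 = -1 := by rw [h, pair_add]; simp
      have hne : (q (i + 1)).1 - (q i).1 ≠ 0 := by omega
      have hp1 : pA k q (i + 1) = pA k q i + (exA k q, 0) := by rw [pA, if_pos hne]
      have hbx : bxA k q i = decide ((-1 : ℤ) = -1) := by rw [hI1x i hi hne, hσ]
      have hb1 : xor (bxA k q i) (bxA k q 0) =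
          xor (decide ((-1 : ℤ) = -1)) (decide (exA k q = -1)) := by rw [hbx, hdecx]
      have hb2 : xor (bxA k q (i + 1)) (bxA k q 0) =
          xor (decide ((1 : ℤ) = -1)) (decide (-exA k q = -1)) := by
        rw [hI2x i hi hne, hb1]
        have := xor_decide_neg (-1) (exA k q) (Or.inr rfl) hεx1
        rw [this]
        norm_num
      constructor
      · rw [hp1, h]
        simp only [plA, flipA]
        exact fg_flip_horiz' (plOf α (q i)) _ _ (exA k q) (-1) _ _ (Or.inr rfl) hεx1 hb1
      · have hq2 : q i = q (i + 1) + (1, 0) :=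
          pair_shift (q i) (q (i + 1)) (-1) 0 1 0 h (by norm_num) (by norm_num)
        have hp2 : pA k q i = pA k q (i + 1) + (-exA k q, 0) :=
          pair_shift (pA k q i) (pA k q (i + 1)) (exA k q) 0 (-exA k q) 0 hp1 rfl
            (by norm_num)
        rw [hp2, hq2]
        simp only [plA, flipA]
        exact fg_flip_horiz' (plOf α (q (i + 1))) _ _ (-exA k q) 1 _ _ (Or.inl rfl)
          (by rcases hεx1 with h' | h' <;> rw [h'] <;> norm_num) hb2
    · -- step (0,1)
      have hσ : (q (i + 1)).2 - (q i).2 = 1 := by rw [h, pair_add]; simp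
      have hσx : ¬((q (i + 1)).1 - (q i).1 ≠ 0) := by rw [h, pair_add]; simp
      have hne : (q (i + 1)).2 - (q i).2 ≠ 0 := by omega
      have hp1 : pA k q (i + 1) = pA k q i + (0, eyA k q) := by rw [pA, if_neg hσx]
      have hby : byA k q i = decide ((1 : ℤ) = -1) := by rw [hI1y i hi hne, hσ]
      have hb1 : xor (byA k q i) (byA k q 0) =
          xor (decide ((1 : ℤ) = -1)) (decide (eyA k q = -1)) := by rw [hby, hdecy]
      have hb2 : xor (byA k q (i + 1)) (byA k q 0) =
          xor (decide ((-1 : ℤ) = -1)) (decide (-eyA k q = -1)) := by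
        rw [hI2y i hi hne, hb1]
        exact xor_decide_neg 1 (eyA k q) (Or.inl rfl) hεy1
      constructor
      · rw [hp1, h]
        simp only [plA, flipA]
        exact fg_flip_vert' (plOf α (q i)) _ _ (eyA k q) 1 _ _ (Or.inl rfl) hεy1 hb1
      · have hq2 : q i = q (i + 1) + (0, -1) :=
          pair_shift (q i) (q (i + 1)) 0 1 0 (-1) h (by norm_num) (by norm_num)
        have hp2 : pA k q i = pA k q (i + 1) + (0, -eyA k q) :=
          pair_shift (pA k q i) (pA k q (i + 1)) 0 (eyA k q) 0 (-eyA k q) hp1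
            (by norm_num) rfl
        rw [hp2, hq2]
        simp only [plA, flipA]
        exact fg_flip_vert' (plOf α (q (i + 1))) _ _ (-eyA k q) (-1) _ _ (Or.inr rfl)
          (by rcases hεy1 with h' | h' <;> rw [h'] <;> norm_num) hb2
    · -- step (0,-1)
      have hσ : (q (i + 1)).2 - (q i).2 = -1 := by rw [h, pair_add]; simp
      have hσx : ¬((q (i + 1)).1 - (q i).1 ≠ 0) := by rw [h, pair_add]; simp
      have hne : (q (i + 1)).2 - (q i).2 ≠ 0 := by omega
      have hp1 : pA k q (i + 1) = pA k q i + (0, eyA k q) := by rw [pA, if_neg hσx]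
      have hby : byA k q i = decide ((-1 : ℤ) = -1) := by rw [hI1y i hi hne, hσ]
      have hb1 : xor (byA k q i) (byA k q 0) =
          xor (decide ((-1 : ℤ) = -1)) (decide (eyA k q = -1)) := by rw [hby, hdecy]
      have hb2 : xor (byA k q (i + 1)) (byA k q 0) =
          xor (decide ((1 : ℤ) = -1)) (decide (-eyA k q = -1)) := by
        rw [hI2y i hi hne, hb1]
        have := xor_decide_neg (-1) (eyA k q) (Or.inr rfl) hεy1
        rw [this]
        norm_num
      constructor
      · rw [hp1, h]
        simp only [plA, flipA]
        exact fg_flip_vert' (plOf α (q i)) _ _ (eyA k q) (-1) _ _ (Or.inr rfl) hεy1 hb1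
      · have hq2 : q i = q (i + 1) + (0, 1) :=
          pair_shift (q i) (q (i + 1)) 0 (-1) 0 1 h (by norm_num) (by norm_num)
        have hp2 : pA k q i = pA k q (i + 1) + (0, -eyA k q) :=
          pair_shift (pA k q i) (pA k q (i + 1)) 0 (eyA k q) 0 (-eyA k q) hp1
            (by norm_num) rfl
        rw [hp2, hq2]
        simp only [plA, flipA]
        exact fg_flip_vert' (plOf α (q (i + 1))) _ _ (-eyA k q) 1 _ _ (Or.inl rfl)
          (by rcases hεy1 with h' | h' <;> rw [h'] <;> norm_num) hb2
  -- seed tile facts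
  have hs0dom : Sys.seed s0 ≠ none := by
    have : s0 ∈ adom Sys.seed := by rw [hseed]; rfl
    exact this
  obtain ⟨pl0, hpl0⟩ := Option.ne_none_iff_exists'.mp hs0dom
  have hα0 : α s0 = some pl0 := (hflim s0 pl0).mpr ⟨0, by rw [hf0]; exact hpl0⟩
  have hp0 : pA k q 0 = s0 := by rw [pA]; exact hq0
  have hplA0 : plA α k q 0 = pl0 := by
    rw [plA, flipA]
    simp only [Bool.xor_self]
    rw [hq0, plOf, hα0]
    simp [Reflection.comp]
  -- domain facts
  have hDa : ∀ n, ∀ i, i ≤ n → i < k → gA Sys α k q n (pA k q i) = some (plA α k q i) := by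
    intro n
    induction n with
    | zero =>
      intro i h1 _
      have h0 : i = 0 := Nat.le_zero.mp h1
      subst h0
      rw [gA, hp0, hplA0]
      exact hpl0
    | succ n ih =>
      intro i h1 h2
      rw [gA]
      by_cases hn1 : n + 1 < k
      · rw [if_pos hn1]
        rcases Nat.eq_or_lt_of_le h1 with he | hlt
        · rw [he, Function.update_self]
        · have hne : pA k q i ≠ pA k q (n + 1) := fun hc => by
            have := hpinj _ _ hc; omega
          rw [Function.update_of_ne hne]
          exact ih i (by omega) h2
      · rw [if_neg hn1]
        exact ih i (by omega) h2
  have hDb : ∀ n x, (∀ i, i ≤ n → i < k → x ≠ pA k q i) → gA Sys α k q n x = none := by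
    intro n
    induction n with
    | zero =>
      intro x hx
      rw [gA]
      by_contra hc
      have hmem : x ∈ adom Sys.seed := hc
      rw [hseed] at hmem
      exact hx 0 le_rfl hk (by rw [hp0]; exact Set.mem_singleton_iff.mp hmem)
    | succ n ih =>
      intro x hx
      rw [gA]
      by_cases hn1 : n + 1 < k
      · rw [if_pos hn1, Function.update_of_ne (hx (n + 1) le_rfl hn1)]
        exact ih x fun i h1 h2 => hx i (by omega) h2
      · rw [if_neg hn1]
        exact ih x fun i h1 h2 => hx i (by omega) h2
  have hadomg : ∀ n x, x ∈ adom (gA Sys α k q n) ↔ ∃ i, i ≤ n ∧ i < k ∧ x = pA k q i := by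
    intro n x
    constructor
    · intro hx
      by_contra hno
      push_neg at hno
      exact hx (hDb n x hno)
    · rintro ⟨i, h1, h2, rfl⟩
      intro hc
      rw [hDa n i h1 h2] at hc
      exact Option.some_ne_none _ hc
  have hbondgen : ∀ (γ : Assembly) i, i + 1 < k →
      γ (pA k q i) = some (plA α k q i) →
      γ (pA k q (i + 1)) = some (plA α k q (i + 1)) →
      0 < bondStrength γ (pA k q i) (pA k q (i + 1)) ∧
        0 < bondStrength γ (pA k q (i + 1)) (pA k q i) := by
    intro γ i hi h1 h2
    constructor
    · rw [bondStrength_some γ _ _ _ _ h1 h2, (hkey i hi).1, (hkey i hi).2]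
      exact hbond i hi
    · rw [bondStrength_some γ _ _ _ _ h2 h1, glueBind_comm, (hkey i hi).1, (hkey i hi).2]
      exact hbond i hi
  have hstab : ∀ n, Stable (gA Sys α k q n) 1 := by
    intro n A hA hAne hAcne
    obtain ⟨a, ha⟩ := hAne
    obtain ⟨b, hbd, hbA⟩ := hAcne
    have hcross : ∃ l, l + 1 ≤ n ∧ l + 1 < k ∧ ¬(pA k q l ∈ A ↔ pA k q (l + 1) ∈ A) := by
      by_contra hno
      push_neg at hno
      have hconst : ∀ i, i ≤ n → i < k → (pA k q i ∈ A ↔ pA k q 0 ∈ A) := by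
        intro i
        induction i with
        | zero => intro _ _; exact Iff.rfl
        | succ m ih =>
          intro h1 h2
          rw [← ih (by omega) (by omega)]
          exact (hno m h1 h2).symm
      obtain ⟨ia, h1a, h2a, hxa⟩ := (hadomg n a).mp (hA ha)
      obtain ⟨ib, h1b, h2b, hxb⟩ := (hadomg n b).mp hbd
      subst hxa
      subst hxb
      exact hbA ((hconst ib h1b h2b).mpr ((hconst ia h1a h2a).mp ha))
    obtain ⟨l, hl1, hl2, hlx⟩ := hcross
    have hm1 : pA k q l ∈ adom (gA Sys α k q n) :=
      (hadomg n _).mpr ⟨l, by omega, by omega, rfl⟩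
    have hm2 : pA k q (l + 1) ∈ adom (gA Sys α k q n) :=
      (hadomg n _).mpr ⟨l + 1, hl1, hl2, rfl⟩
    have hbd2 := hbondgen (gA Sys α k q n) l hl2 (hDa n l (by omega) (by omega))
      (hDa n (l + 1) hl1 hl2)
    by_cases hcase : pA k q l ∈ A
    · have h2 : pA k q (l + 1) ∉ A := fun hc => hlx (iff_of_true hcase hc)
      refine ⟨{(pA k q l, pA k q (l + 1))}, ?_, ?_⟩
      · intro e he
        rw [Finset.mem_singleton] at he
        subst he
        exact ⟨hcase, hm2, h2⟩
      · rw [Finset.sum_singleton]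
        exact hbd2.1
    · have h2 : pA k q (l + 1) ∈ A := by
        by_contra hc
        exact hlx (iff_of_false hcase hc)
      refine ⟨{(pA k q (l + 1), pA k q l)}, ?_, ?_⟩
      · intro e he
        rw [Finset.mem_singleton] at he
        subst he
        exact ⟨h2, hm1, hcase⟩
      · rw [Finset.sum_singleton]
        exact hbd2.2
  have hgsucc : ∀ n, n + 1 < k → gA Sys α k q (n + 1) =
      Function.update (gA Sys α k q n) (pA k q (n + 1)) (some (plA α k q (n + 1))) := by
    intro n hn
    rw [gA, if_pos hn]
  have hgstop : ∀ n, ¬(n + 1 < k) → gA Sys α k q (n + 1) = gA Sys α k q n := by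
    intro n hn
    rw [gA, if_neg hn]
  have hatt : ∀ n, n + 1 < k → Attaches Sys (gA Sys α k q n) (gA Sys α k q (n + 1)) := by
    intro n hn
    refine ⟨pA k q (n + 1), (plOf α (q (n + 1))).1,
      Reflection.comp (flipA k q (n + 1)) (plOf α (q (n + 1))).2, ?_, ?_, ?_, ?_⟩
    · apply hDb
      intro i h1 h2 hc
      have := hpinj (n + 1) i hc
      omega
    · exact htiles (q (n + 1)) (plOf α (q (n + 1))) (htile (n + 1) hn)
    · rw [hgsucc n hn]; rfl
    · rw [hτ]; exact hstab (n + 1)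
  have hconstg : ∀ m, gA Sys α k q (k - 1 + m) = gA Sys α k q (k - 1) := by
    intro m
    induction m with
    | zero => rfl
    | succ m ih =>
      have he : k - 1 + (m + 1) = (k - 1 + m) + 1 := by omega
      rw [he, hgstop (k - 1 + m) (by omega)]
      exact ih
  refine ⟨exA k q, eyA k q, hεx1, hεy1, gA Sys α k q (k - 1),
    ⟨gA Sys α k q, rfl, ?_, ?_⟩, pA k q, hp0, ?_, ?_, ?_⟩
  · intro n
    by_cases hn : n + 1 < k
    · exact Or.inr (hatt n hn)
    · exact Or.inl (hgstop n hn)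
  · intro x pl
    constructor
    · intro h
      exact ⟨k - 1, h⟩
    · rintro ⟨n, hn⟩
      rcases le_or_gt n (k - 1) with h | h
      · have hx : x ∈ adom (gA Sys α k q n) := fun hc => by
          rw [hn] at hc
          exact Option.some_ne_none _ hc
        obtain ⟨i, h1, h2, rfl⟩ := (hadomg n x).mp hx
        rw [hDa n i h1 h2] at hn
        rw [hDa (k - 1) i (by omega) h2]
        exact hn
      · have he : n = k - 1 + (n - (k - 1)) := by omega
        rw [he, hconstg] at hn
        exact hn
  · intro i hi
    rw [pA_succ]
    by_cases hc : (q (i + 1)).1 - (q i).1 ≠ 0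
    · rw [if_pos hc]
      left
      exact add_sub_cancel_left _ _
    · rw [if_neg hc]
      right
      exact add_sub_cancel_left _ _
  · ext x
    rw [hadomg (k - 1) x]
    simp only [Set.mem_setOf_eq]
    constructor
    · rintro ⟨i, h1, h2, rfl⟩
      exact ⟨i, h2, rfl⟩
    · rintro ⟨i, h2, rfl⟩
      exact ⟨i, by omega, h2, rfl⟩
  · intro i hi
    simp only [config]
    rw [hDa (k - 1) i (by omega) hi, htile i hi]
    rfl
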